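/- arXiv:1704.04939 — 4 statements merged into one kernel-verified Lean document; each statement's English description precedes it below -/
import Mathlib

section
/- For each j ∈ ℕ let G_j be a locally compact Hausdorff second countable topological space and let p_j : G_{j+1} → G_j be a continuous proper map. Then the inverse limit Ḡ is a locally compact Hausdorff second countable topological space. -/
/-!
Hausdorffness and second countability pass to subspaces of countable products, and a Hausdorff
space in which every point has a compact neighbourhood is locally compact. The composites
`toZero p j : G j → G 0` of the bonding maps are proper, and for compact `K ⊆ G 0` the points
of the limit whose `0`-th coordinate lies in `K` form a closed subset of the compact box
`∏ j, (toZero p j)⁻¹ K`. So the projection to `G 0` pulls compact neighbourhoods back to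
compact neighbourhoods.
-/

open Set

/-- The inverse limit of an inverse sequence of topological spaces, as a subspace of the
product space. -/
abbrev InverseLimit (G : ℕ → Type*) (p : ∀ j, G (j + 1) → G j) : Type _ :=
  { x : ∀ j, G j // ∀ j, p j (x (j + 1)) = x j }

theorem WeaklyLocallyCompactSpace.of_isCompact_preimage {X Y : Type*} [TopologicalSpace X]
    [TopologicalSpace Y] [WeaklyLocallyCompactSpace Y] {f : X → Y} (hf : Continuous f)
    (hpre : ∀ K : Set Y, IsCompact K → IsCompact (f ⁻¹' K)) : WeaklyLocallyCompactSpace X where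
  exists_compact_mem_nhds x := by
    obtain ⟨K, hK, hKx⟩ := exists_compact_mem_nhds (f x)
    exact ⟨f ⁻¹' K, hpre K hK, hf.continuousAt.preimage_mem_nhds hKx⟩

namespace InverseLimit

variable {G : ℕ → Type*} {p : ∀ j, G (j + 1) → G j}

def toZero (p : ∀ j, G (j + 1) → G j) : ∀ j, G j → G 0
  | 0 => id
  | j + 1 => toZero p j ∘ p j

theorem toZero_val (x : InverseLimit G p) (j : ℕ) : toZero p j (x.1 j) = x.1 0 := by
  induction j with
  | zero => rfl
  | succ j ih => simpa only [toZero, Function.comp_apply, x.2 j] using ih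

theorem preimage_val_pi_preimage_toZero (K : Set (G 0)) :
    Subtype.val ⁻¹' univ.pi (fun j ↦ toZero p j ⁻¹' K) = {x : InverseLimit G p | x.1 0 ∈ K} := by
  ext x
  simp only [mem_preimage, mem_univ_pi, toZero_val, mem_ofPred_eq, forall_const]

variable [∀ j, TopologicalSpace (G j)]

theorem isCompact_preimage_toZero (hpp : ∀ j, ∀ K : Set (G j), IsCompact K → IsCompact (p j ⁻¹' K))
    (j : ℕ) {K : Set (G 0)} (hK : IsCompact K) : IsCompact (toZero p j ⁻¹' K) := by
  induction j with
  | zero => exact hK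
  | succ j ih => exact hpp j _ ih

theorem isClosed_setOf_compatible [∀ j, T2Space (G j)] (hpc : ∀ j, Continuous (p j)) :
    IsClosed {x : ∀ j, G j | ∀ j, p j (x (j + 1)) = x j} := by
  simp only [ofPred_forall]
  exact isClosed_iInter fun j ↦ isClosed_eq ((hpc j).comp (continuous_apply _)) (continuous_apply _)

theorem isCompact_setOf_zero_mem [∀ j, T2Space (G j)] (hpc : ∀ j, Continuous (p j))
    (hpp : ∀ j, ∀ K : Set (G j), IsCompact K → IsCompact (p j ⁻¹' K))
    {K : Set (G 0)} (hK : IsCompact K) : IsCompact {x : InverseLimit G p | x.1 0 ∈ K} := by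
  rw [← preimage_val_pi_preimage_toZero]
  exact (isClosed_setOf_compatible hpc).isClosedEmbedding_subtypeVal.isCompact_preimage
    (isCompact_univ_pi fun j ↦ isCompact_preimage_toZero hpp j hK)

end InverseLimit

/-- If each `G j` is a locally compact Hausdorff second countable space and
each bonding map `p j : G (j+1) → G j` is continuous and proper (preimages of compact sets
are compact), then the inverse limit is locally compact, Hausdorff and second countable. -/
theorem inverseLimit_locallyCompact_t2_secondCountable
    (G : ℕ → Type*) [∀ j, TopologicalSpace (G j)]
    [∀ j, LocallyCompactSpace (G j)] [∀ j, T2Space (G j)]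
    [∀ j, SecondCountableTopology (G j)]
    (p : ∀ j, G (j + 1) → G j) (hpc : ∀ j, Continuous (p j))
    (hpp : ∀ j, ∀ K : Set (G j), IsCompact K → IsCompact (p j ⁻¹' K)) :
    LocallyCompactSpace (InverseLimit G p) ∧ T2Space (InverseLimit G p) ∧
      SecondCountableTopology (InverseLimit G p) := by
  have : WeaklyLocallyCompactSpace (InverseLimit G p) :=
    .of_isCompact_preimage (f := fun x : InverseLimit G p ↦ x.1 0)
      ((continuous_apply 0).comp continuous_subtype_val)
      fun _ hK ↦ InverseLimit.isCompact_setOf_zero_mem hpc hpp hK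
  have : SecondCountableTopology (InverseLimit G p) :=
    TopologicalSpace.secondCountableTopology_induced _ _ Subtype.val
  exact ⟨inferInstance, inferInstance, this⟩
end

section
/- Let (Σ_j, p_j)_{j ∈ ℕ} and (G_j, q_j)_{j ∈ ℕ} be inverse sequences of topological spaces with continuous bonding maps, and let π_j : Σ_j → G_j be continuous maps satisfying π_j ∘ p_j = q_j ∘ π_{j+1}. Let Z be a topological group acting continuously on each Σ_j such that every p_j is Z-equivariant. Let U_0 ⊆ G_0 be open, U_{j+1} := q_j^{-1}(U_j), and let ρ_j : U_j → Σ_j be continuous maps with π_j ∘ ρ_j = id and p_j ∘ ρ_{j+1} = ρ_j ∘ q_j on U_{j+1}. Assume that for every j the map Z × U_j → Σ_j, (z, γ) ↦ z·ρ_j(γ), is a homeomorphism onto π_j^{-1}(U_j). Let Σ̄, Ḡ be the inverse limits, π̄ : Σ̄ → Ḡ the induced map, Ū := (q_0^∞)^{-1}(U_0), and ρ̄ : Ū → Σ̄, (γ_j) ↦ (ρ_j(γ_j)). Then: (a) acting coordinatewise, Z acts continuously on Σ̄; (b) the map Z × Ū → Σ̄, (z, x) ↦ z·ρ̄(x), is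 a homeomorphism onto π̄^{-1}(Ū). In particular, local trivializations of a principal Z-bundle structure pass to the inverse limit. -/
/-!
Coordinatewise, `(z, x) ↦ z • ρ̄ x` is the inverse limit of the trivializations
`t j (z, γ) = z • ρ j γ`, which are compatible with the bonding maps because the `p j` are
equivariant and the sections `ρ j` are compatible. Bijectivity passes to the limit: a point `σ`
over `Ū` has a unique preimage `(z j, γ j)` in every coordinate, and injectivity of `t j` forces
`z (j + 1) = z j` and `q j (γ (j + 1)) = γ j`. The inverse is then continuous since each of its
coordinates is a continuous function of a single coordinate of `σ`, and continuity of the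
inverse is exactly openness of the limit map relative to its image.
-/

open Set Function

namespace Set.BijOn

variable {α β : Type*} [Nonempty α] {f : α → β} {s : Set α} {t : Set β}

theorem image_inter_eq_preimage_invFunOn_inter (h : BijOn f s t) (V : Set α) :
    f '' (V ∩ s) = invFunOn f s ⁻¹' V ∩ t := by
  rw [h.injOn.leftInvOn_invFunOn.image_inter', h.image_eq]

theorem continuousOn_invFunOn_iff [TopologicalSpace α] [TopologicalSpace β] (h : BijOn f s t) :
    ContinuousOn (invFunOn f s) t ↔
      ∀ V, IsOpen V → ∃ W, IsOpen W ∧ f '' (V ∩ s) = W ∩ t := by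
  simp only [continuousOn_iff', h.image_inter_eq_preimage_invFunOn_inter]

theorem continuousOn_invFunOn_of_isOpen_image [TopologicalSpace α] [TopologicalSpace β]
    (h : BijOn f s t) (hf : ∀ V, IsOpen V → IsOpen (f '' (V ∩ s))) :
    ContinuousOn (invFunOn f s) t :=
  h.continuousOn_invFunOn_iff.mpr fun V hV => ⟨_, hf V hV,
    (inter_eq_left.mpr ((image_mono inter_subset_right).trans h.image_eq.subset)).symm⟩

end Set.BijOn

namespace InverseLimit

variable {G : ℕ → Type*} {q : ∀ j, G (j + 1) → G j} {U : ∀ j, Set (G j)}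

theorem mem_of_mem_zero (hU : ∀ j, U (j + 1) = q j ⁻¹' U j)
    (x : InverseLimit G q) (h0 : x.1 0 ∈ U 0) : ∀ j, x.1 j ∈ U j
  | 0 => h0
  | j + 1 => by
    rw [hU, mem_preimage, x.2 j]
    exact mem_of_mem_zero hU x h0 j

variable {S : ℕ → Type*} {p : ∀ j, S (j + 1) → S j} {Z : Type*} {T : ∀ j, Set (S j)}
  {t : ∀ j, Z × G j → S j}

def limMap (t : ∀ j, Z × G j → S j) : Z × InverseLimit G q → ∀ j, S j :=
  fun zx j => t j (zx.1, zx.2.1 j)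

theorem mapsTo_limMap (hU : ∀ j, U (j + 1) = q j ⁻¹' U j)
    (ht_compat : ∀ j z, ∀ γ ∈ U (j + 1), p j (t (j + 1) (z, γ)) = t j (z, q j γ))
    (ht_mapsTo : MapsTo (t 0) (univ ×ˢ U 0) (T 0)) :
    MapsTo (limMap t) {zx : Z × InverseLimit G q | zx.2.1 0 ∈ U 0}
      {σ | (∀ j, p j (σ (j + 1)) = σ j) ∧ σ 0 ∈ T 0} := by
  rintro ⟨z, x⟩ hx
  refine ⟨fun j => ?_, ht_mapsTo ⟨mem_univ z, hx⟩⟩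
  simp only [limMap]
  rw [ht_compat j z _ (mem_of_mem_zero hU x hx (j + 1)), x.2 j]

theorem injOn_limMap (hU : ∀ j, U (j + 1) = q j ⁻¹' U j)
    (ht_inj : ∀ j, InjOn (t j) (univ ×ˢ U j)) :
    InjOn (limMap t) {zx : Z × InverseLimit G q | zx.2.1 0 ∈ U 0} := by
  rintro ⟨z, x⟩ hx ⟨z', x'⟩ hx' h
  have hcoord : ∀ j, (z, x.1 j) = (z', x'.1 j) := fun j =>
    ht_inj j ⟨mem_univ z, mem_of_mem_zero hU x hx j⟩
      ⟨mem_univ z', mem_of_mem_zero hU x' hx' j⟩ (congrFun h j)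
  simp only [Prod.mk.injEq] at hcoord
  rw [(hcoord 0).1, Subtype.ext (funext fun j => (hcoord j).2)]

theorem surjOn_limMap (hU : ∀ j, U (j + 1) = q j ⁻¹' U j)
    (hT : ∀ j, T (j + 1) = p j ⁻¹' T j)
    (ht_compat : ∀ j z, ∀ γ ∈ U (j + 1), p j (t (j + 1) (z, γ)) = t j (z, q j γ))
    (ht_bij : ∀ j, BijOn (t j) (univ ×ˢ U j) (T j)) :
    SurjOn (limMap t) {zx : Z × InverseLimit G q | zx.2.1 0 ∈ U 0}
      {σ | (∀ j, p j (σ (j + 1)) = σ j) ∧ σ 0 ∈ T 0} := by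
  rintro σ ⟨hσ, hσ0⟩
  choose w hw htw using fun j => (ht_bij j).surjOn (mem_of_mem_zero hT ⟨σ, hσ⟩ hσ0 j)
  have hstep : ∀ j, ((w (j + 1)).1, q j (w (j + 1)).2) = w j := by
    intro j
    have hq : (w (j + 1)).2 ∈ q j ⁻¹' U j := by
      rw [← hU]
      exact (hw (j + 1)).2
    refine (ht_bij j).injOn (show (_, _) ∈ univ ×ˢ U j from ⟨mem_univ _, hq⟩) (hw j) ?_
    rw [← ht_compat j _ _ (hw (j + 1)).2, htw, htw, hσ]
  have hz : ∀ j, (w j).1 = (w 0).1 := by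
    intro j
    induction j with
    | zero => rfl
    | succ j ih => exact (congrArg Prod.fst (hstep j)).trans ih
  refine ⟨((w 0).1, ⟨fun j => (w j).2, fun j => congrArg Prod.snd (hstep j)⟩),
    (hw 0).2, ?_⟩
  funext j
  simp only [limMap, ← hz j]
  exact htw j

theorem bijOn_limMap (hU : ∀ j, U (j + 1) = q j ⁻¹' U j)
    (hT : ∀ j, T (j + 1) = p j ⁻¹' T j)
    (ht_compat : ∀ j z, ∀ γ ∈ U (j + 1), p j (t (j + 1) (z, γ)) = t j (z, q j γ))
    (ht_bij : ∀ j, BijOn (t j) (univ ×ˢ U j) (T j)) :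
    BijOn (limMap t) {zx : Z × InverseLimit G q | zx.2.1 0 ∈ U 0}
      {σ | (∀ j, p j (σ (j + 1)) = σ j) ∧ σ 0 ∈ T 0} :=
  ⟨mapsTo_limMap hU ht_compat (ht_bij 0).mapsTo, injOn_limMap hU fun j => (ht_bij j).injOn,
    surjOn_limMap hU hT ht_compat ht_bij⟩

variable [∀ j, TopologicalSpace (S j)] [∀ j, TopologicalSpace (G j)] [TopologicalSpace Z]

theorem continuousOn_limMap (hU : ∀ j, U (j + 1) = q j ⁻¹' U j)
    (ht_cont : ∀ j, ContinuousOn (t j) (univ ×ˢ U j)) :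
    ContinuousOn (limMap t) {zx : Z × InverseLimit G q | zx.2.1 0 ∈ U 0} := by
  refine continuousOn_pi.mpr fun j => (ht_cont j).comp ?_ fun zx hzx => ?_
  · exact (continuous_fst.prodMk
      ((continuous_apply j).comp (continuous_subtype_val.comp continuous_snd))).continuousOn
  · exact ⟨mem_univ _, mem_of_mem_zero hU zx.2 hzx j⟩

theorem continuousOn_invFunOn_limMap [Nonempty (Z × InverseLimit G q)]
    (hU : ∀ j, U (j + 1) = q j ⁻¹' U j) (hT : ∀ j, T (j + 1) = p j ⁻¹' T j)
    (ht_compat : ∀ j z, ∀ γ ∈ U (j + 1), p j (t (j + 1) (z, γ)) = t j (z, q j γ))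
    (ht_bij : ∀ j, BijOn (t j) (univ ×ˢ U j) (T j))
    (ht_open : ∀ j V, IsOpen V → IsOpen (t j '' (V ∩ univ ×ˢ U j))) :
    ContinuousOn (invFunOn (limMap t) {zx : Z × InverseLimit G q | zx.2.1 0 ∈ U 0})
      {σ | (∀ j, p j (σ (j + 1)) = σ j) ∧ σ 0 ∈ T 0} := by
  set D := {zx : Z × InverseLimit G q | zx.2.1 0 ∈ U 0}
  set E : Set (∀ j, S j) := {σ | (∀ j, p j (σ (j + 1)) = σ j) ∧ σ 0 ∈ T 0}
  set g := invFunOn (limMap t) D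
  have hbij := bijOn_limMap hU hT ht_compat ht_bij
  have (j : ℕ) : Nonempty (Z × G j) :=
    ‹Nonempty (Z × InverseLimit G q)›.map fun zx => (zx.1, zx.2.1 j)
  have hτ (j : ℕ) :
      ContinuousOn (fun σ : ∀ j, S j => invFunOn (t j) (univ ×ˢ U j) (σ j)) E :=
    ((ht_bij j).continuousOn_invFunOn_of_isOpen_image (ht_open j)).comp
      (continuous_apply j).continuousOn fun σ hσ => mem_of_mem_zero hT ⟨σ, hσ.1⟩ hσ.2 j
  have hcoord : ∀ σ ∈ E, ∀ j,
      ((g σ).1, (g σ).2.1 j) = invFunOn (t j) (univ ×ˢ U j) (σ j) := by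
    intro σ hσ j
    have hgσ : g σ ∈ D := hbij.surjOn.mapsTo_invFunOn hσ
    have hσ_eq : limMap t (g σ) = σ := hbij.surjOn.rightInvOn_invFunOn hσ
    conv_rhs => rw [← hσ_eq]
    exact ((ht_bij j).injOn.leftInvOn_invFunOn ⟨mem_univ _, mem_of_mem_zero hU _ hgσ j⟩).symm
  have hfst : ContinuousOn (fun σ => (g σ).1) E :=
    (continuous_fst.comp_continuousOn (hτ 0)).congr fun σ hσ =>
      congrArg Prod.fst (hcoord σ hσ 0)
  have hsnd : ContinuousOn (fun σ => (g σ).2) E :=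
    Topology.IsInducing.subtypeVal.continuousOn_iff.mpr <| continuousOn_pi.mpr fun j =>
      (continuous_snd.comp_continuousOn (hτ j)).congr fun σ hσ =>
        congrArg Prod.snd (hcoord σ hσ j)
  exact hfst.prodMk hsnd

theorem exists_isOpen_limMap_image_inter (hU : ∀ j, U (j + 1) = q j ⁻¹' U j)
    (hT : ∀ j, T (j + 1) = p j ⁻¹' T j)
    (ht_compat : ∀ j z, ∀ γ ∈ U (j + 1), p j (t (j + 1) (z, γ)) = t j (z, q j γ))
    (ht_bij : ∀ j, BijOn (t j) (univ ×ˢ U j) (T j))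
    (ht_open : ∀ j V, IsOpen V → IsOpen (t j '' (V ∩ univ ×ˢ U j)))
    {V : Set (Z × InverseLimit G q)} (hV : IsOpen V) :
    ∃ W, IsOpen W ∧ limMap t '' (V ∩ {zx | zx.2.1 0 ∈ U 0}) =
      W ∩ {σ | (∀ j, p j (σ (j + 1)) = σ j) ∧ σ 0 ∈ T 0} := by
  obtain _ | _ := isEmpty_or_nonempty (Z × InverseLimit G q)
  · exact ⟨∅, isOpen_empty, by simp [eq_empty_of_isEmpty (V ∩ _)]⟩
  · exact (bijOn_limMap hU hT ht_compat ht_bij).continuousOn_invFunOn_iff.mp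
      (continuousOn_invFunOn_limMap hU hT ht_compat ht_bij ht_open) V hV

end InverseLimit

theorem inverseLimit_principal_bundle_local_trivialization_general
    (S G : ℕ → Type*) [∀ j, TopologicalSpace (S j)] [∀ j, TopologicalSpace (G j)]
    (p : ∀ j, S (j + 1) → S j) (q : ∀ j, G (j + 1) → G j)
    (π : ∀ j, S j → G j)
    (hcomm : ∀ j (x : S (j + 1)), π j (p j x) = q j (π (j + 1) x))
    (Z : Type*) [TopologicalSpace Z] [Group Z]
    [∀ j, MulAction Z (S j)] [∀ j, ContinuousSMul Z (S j)]
    (hequiv : ∀ j (z : Z) (x : S (j + 1)), p j (z • x) = z • p j x)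
    (U : ∀ j, Set (G j)) (hUsucc : ∀ j, U (j + 1) = q j ⁻¹' U j)
    (ρ : ∀ j, G j → S j)
    (hρcomp : ∀ j, ∀ γ ∈ U (j + 1), p j (ρ (j + 1) γ) = ρ j (q j γ))
    -- `(z, γ) ↦ z • ρ j γ` is a homeomorphism of `Z × U j` onto `π j ⁻¹' (U j)`:
    (htriv_bij : ∀ j, Set.BijOn (fun zγ : Z × G j => zγ.1 • ρ j zγ.2)
      (Set.univ ×ˢ U j) (π j ⁻¹' U j))
    (htriv_cont : ∀ j, ContinuousOn (fun zγ : Z × G j => zγ.1 • ρ j zγ.2) (Set.univ ×ˢ U j))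
    (htriv_open : ∀ j, ∀ V : Set (Z × G j), IsOpen V →
      IsOpen ((fun zγ : Z × G j => zγ.1 • ρ j zγ.2) '' (V ∩ Set.univ ×ˢ U j)))
    -- the map `(z, x) ↦ z • ρ̄ x` from `Z × Ḡ` into the ambient product `∀ j, Σ j`,
    -- the domain `Z × Ū`, and the target `π̄ ⁻¹' Ū ⊆ Σ̄`:
    (Fbar : Z × InverseLimit G q → ∀ j, S j)
    (hFbar : Fbar = fun zx => fun j => zx.1 • ρ j (zx.2.1 j))
    (Dom : Set (Z × InverseLimit G q)) (hDom : Dom = {zx | zx.2.1 0 ∈ U 0})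
    (Tgt : Set (∀ j, S j))
    (hTgt : Tgt = {σ | (∀ j, p j (σ (j + 1)) = σ j) ∧ π 0 (σ 0) ∈ U 0}) :
    -- (a) `Z` acts continuously on `Σ̄` coordinatewise:
    ((∀ (z : Z) (σ : InverseLimit S p) (j : ℕ), p j (z • σ.1 (j + 1)) = z • σ.1 j) ∧
      Continuous (fun zσ : Z × InverseLimit S p => (fun j => zσ.1 • zσ.2.1 j : ∀ j, S j))) ∧
    -- (b) `(z, x) ↦ z • ρ̄ x` is a homeomorphism of `Z × Ū` onto `π̄ ⁻¹' Ū`: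
    (Set.BijOn Fbar Dom Tgt ∧ ContinuousOn Fbar Dom ∧
      ∀ V : Set (Z × InverseLimit G q), IsOpen V →
        ∃ W : Set (∀ j, S j), IsOpen W ∧ Fbar '' (V ∩ Dom) = W ∩ Tgt) := by
  subst hFbar hDom hTgt
  have hT (j : ℕ) : π (j + 1) ⁻¹' U (j + 1) = p j ⁻¹' (π j ⁻¹' U j) := by
    ext σ
    simp only [mem_preimage, hUsucc, hcomm]
  have htriv_compat (j : ℕ) (z : Z) (γ : G (j + 1)) (hγ : γ ∈ U (j + 1)) :
      p j (z • ρ (j + 1) γ) = z • ρ j (q j γ) := by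
    rw [hequiv, hρcomp j γ hγ]
  refine ⟨⟨fun z σ j => by rw [hequiv, σ.2 j], ?_⟩,
    InverseLimit.bijOn_limMap hUsucc hT htriv_compat htriv_bij,
    InverseLimit.continuousOn_limMap hUsucc htriv_cont,
    fun V hV => InverseLimit.exists_isOpen_limMap_image_inter hUsucc hT htriv_compat htriv_bij
      htriv_open hV⟩
  exact continuous_pi fun j =>
    continuous_fst.smul ((continuous_apply j).comp (continuous_subtype_val.comp continuous_snd))

/-- Local trivializations of a principal `Z`-bundle structure pass to the
inverse limit: given inverse sequences `(Σ j, p j)`, `(G j, q j)` with compatible maps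
`π j : Σ j → G j`, a topological group `Z` acting continuously on each `Σ j` with
`Z`-equivariant bonding maps, opens `U (j+1) = q j ⁻¹' (U j)` and compatible continuous
sections `ρ j` of `π j` such that `(z, γ) ↦ z • ρ j γ` is a homeomorphism of `Z × U j` onto
`π j ⁻¹' (U j)`, then (a) `Z` acts continuously on the inverse limit `Σ̄` coordinatewise,
and (b) `(z, x) ↦ z • ρ̄ x` is a homeomorphism of `Z × Ū` onto `π̄ ⁻¹' Ū`. -/
theorem inverseLimit_principal_bundle_local_trivialization
    (S G : ℕ → Type*) [∀ j, TopologicalSpace (S j)] [∀ j, TopologicalSpace (G j)]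
    (p : ∀ j, S (j + 1) → S j) (q : ∀ j, G (j + 1) → G j)
    (hpc : ∀ j, Continuous (p j)) (hqc : ∀ j, Continuous (q j))
    (π : ∀ j, S j → G j) (hπc : ∀ j, Continuous (π j))
    (hcomm : ∀ j (x : S (j + 1)), π j (p j x) = q j (π (j + 1) x))
    (Z : Type*) [TopologicalSpace Z] [Group Z] [IsTopologicalGroup Z]
    [∀ j, MulAction Z (S j)] [∀ j, ContinuousSMul Z (S j)]
    (hequiv : ∀ j (z : Z) (x : S (j + 1)), p j (z • x) = z • p j x)
    (U : ∀ j, Set (G j)) (hU0 : IsOpen (U 0)) (hUsucc : ∀ j, U (j + 1) = q j ⁻¹' U j)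
    (ρ : ∀ j, G j → S j) (hρcont : ∀ j, ContinuousOn (ρ j) (U j))
    (hρsec : ∀ j, ∀ γ ∈ U j, π j (ρ j γ) = γ)
    (hρcomp : ∀ j, ∀ γ ∈ U (j + 1), p j (ρ (j + 1) γ) = ρ j (q j γ))
    -- `(z, γ) ↦ z • ρ j γ` is a homeomorphism of `Z × U j` onto `π j ⁻¹' (U j)`:
    (htriv_bij : ∀ j, Set.BijOn (fun zγ : Z × G j => zγ.1 • ρ j zγ.2)
      (Set.univ ×ˢ U j) (π j ⁻¹' U j))
    (htriv_cont : ∀ j, ContinuousOn (fun zγ : Z × G j => zγ.1 • ρ j zγ.2) (Set.univ ×ˢ U j))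
    (htriv_open : ∀ j, ∀ V : Set (Z × G j), IsOpen V →
      IsOpen ((fun zγ : Z × G j => zγ.1 • ρ j zγ.2) '' (V ∩ Set.univ ×ˢ U j)))
    -- the map `(z, x) ↦ z • ρ̄ x` from `Z × Ḡ` into the ambient product `∀ j, Σ j`,
    -- the domain `Z × Ū`, and the target `π̄ ⁻¹' Ū ⊆ Σ̄`:
    (Fbar : Z × InverseLimit G q → ∀ j, S j)
    (hFbar : Fbar = fun zx => fun j => zx.1 • ρ j (zx.2.1 j))
    (Dom : Set (Z × InverseLimit G q)) (hDom : Dom = {zx | zx.2.1 0 ∈ U 0})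
    (Tgt : Set (∀ j, S j))
    (hTgt : Tgt = {σ | (∀ j, p j (σ (j + 1)) = σ j) ∧ π 0 (σ 0) ∈ U 0}) :
    -- (a) `Z` acts continuously on `Σ̄` coordinatewise:
    ((∀ (z : Z) (σ : InverseLimit S p) (j : ℕ), p j (z • σ.1 (j + 1)) = z • σ.1 j) ∧
      Continuous (fun zσ : Z × InverseLimit S p => (fun j => zσ.1 • zσ.2.1 j : ∀ j, S j))) ∧
    -- (b) `(z, x) ↦ z • ρ̄ x` is a homeomorphism of `Z × Ū` onto `π̄ ⁻¹' Ū`: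
    (Set.BijOn Fbar Dom Tgt ∧ ContinuousOn Fbar Dom ∧
      ∀ V : Set (Z × InverseLimit G q), IsOpen V →
        ∃ W : Set (∀ j, S j), IsOpen W ∧ Fbar '' (V ∩ Dom) = W ∩ Tgt) :=
  inverseLimit_principal_bundle_local_trivialization_general S G p q π hcomm Z hequiv U hUsucc ρ
    hρcomp htriv_bij htriv_cont htriv_open Fbar hFbar Dom hDom Tgt hTgt
end

section
/- Let (G_j, p_j)_{j ∈ ℕ} and (X_j, q_j)_{j ∈ ℕ} be inverse sequences of topological spaces with continuous bonding maps, and let s_j : G_j → X_j be continuous maps satisfying q_j ∘ s_{j+1} = s_j ∘ p_j for all j. Assume: (a) for every j, every open U ⊆ X_j and every continuous map t : U → G_j with open image satisfying s_j ∘ t = id_U, there exists a continuous map t' : q_j^{-1}(U) → G_{j+1} with open image satisfying s_{j+1} ∘ t' = id and p_j ∘ t' = t ∘ q_j; (b) for every g ∈ G_0 there exist an open set U ⊆ X_0 containing s_0(g) and a continuous map t : U → G_0 with open image satisfying s_0 ∘ t = id_U and t(s_0(g)) = g; (c) for every j and every x ∈ X_{j+1}, the restriction of p_j to the fiber s_{j+1}^{-1}({x})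 is injective. Let Ḡ, X̄ be the inverse limits and s̄ : Ḡ → X̄ the induced continuous map (g_j) ↦ (s_j(g_j)). Then for every ḡ ∈ Ḡ there exist an open set Ū ⊆ X̄ containing s̄(ḡ) and a continuous map t̄ : Ū → Ḡ with open image such that s̄ ∘ t̄ = id_{Ū} and t̄(s̄(ḡ)) = ḡ. -/
theorem exists_seq_of_forall_exists {α : ℕ → Sort*} (R : ∀ j, α (j + 1) → α j → Prop)
    (step : ∀ j (a : α j), ∃ b, R j b a) (a₀ : α 0) :
    ∃ f : ∀ j, α j, f 0 = a₀ ∧ ∀ j, R j (f (j + 1)) (f j) := by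
  choose next hnext using step
  exact ⟨fun j => Nat.rec a₀ next j, rfl, fun j => hnext j _⟩

namespace InverseLimit

variable {G X : ℕ → Type*} {p : ∀ j, G (j + 1) → G j} {s : ∀ j, G j → X j}

theorem ext_of_injOn_fibers (hinj : ∀ j (x : X (j + 1)), Set.InjOn (p j) (s (j + 1) ⁻¹' {x}))
    {g h : InverseLimit G p} (hs : ∀ j, s j (g.1 j) = s j (h.1 j)) (h0 : g.1 0 = h.1 0) :
    g = h := by
  refine Subtype.ext (funext fun j => ?_)
  induction j with
  | zero => exact h0
  | succ j ih => exact hinj j _ (hs (j + 1)) rfl (by rw [g.2 j, h.2 j, ih])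

end InverseLimit

structure OpenSection {G X : Type*} [TopologicalSpace G] [TopologicalSpace X] (s : G → X) where
  U : Set X
  isOpen_U : IsOpen U
  toFun : U → G
  continuous_toFun : Continuous toFun
  isOpen_range : IsOpen (Set.range toFun)
  apply_toFun : ∀ x : U, s (toFun x) = x

namespace OpenSection

variable {G X G' X' : Type*} [TopologicalSpace G] [TopologicalSpace X]
  [TopologicalSpace G'] [TopologicalSpace X'] {s : G → X} {s' : G' → X'}

def IsLift (p : G' → G) (q : X' → X) (F' : OpenSection s') (F : OpenSection s) : Prop :=
  F'.U = q ⁻¹' F.U ∧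
    ∀ x (hx : x ∈ F'.U) (hx' : q x ∈ F.U), p (F'.toFun ⟨x, hx⟩) = F.toFun ⟨q x, hx'⟩

end OpenSection

section Tower

variable {G X : ℕ → Type*} [∀ j, TopologicalSpace (G j)] [∀ j, TopologicalSpace (X j)]
  {p : ∀ j, G (j + 1) → G j} {q : ∀ j, X (j + 1) → X j} {s : ∀ j, G j → X j}
  {F : ∀ j, OpenSection (s j)}

theorem exists_isLift_of_lift (hqc : ∀ j, Continuous (q j))
    (hlift : ∀ j (U : Set (X j)), IsOpen U → ∀ t : U → G j, Continuous t →
      IsOpen (Set.range t) → (∀ x : U, s j (t x) = x) →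
      ∃ t' : (q j ⁻¹' U : Set (X (j + 1))) → G (j + 1), Continuous t' ∧
        IsOpen (Set.range t') ∧ (∀ x : (q j ⁻¹' U : Set (X (j + 1))), s (j + 1) (t' x) = x) ∧
        ∀ x : (q j ⁻¹' U : Set (X (j + 1))), p j (t' x) = t ⟨q j x.1, x.2⟩)
    (j : ℕ) (F : OpenSection (s j)) :
    ∃ F' : OpenSection (s (j + 1)), F'.IsLift (p j) (q j) F := by
  obtain ⟨t', ht'c, ht'o, ht's, ht'p⟩ :=
    hlift j F.U F.isOpen_U F.toFun F.continuous_toFun F.isOpen_range F.apply_toFun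
  exact ⟨⟨_, F.isOpen_U.preimage (hqc j), t', ht'c, ht'o, ht's⟩, rfl, fun x hx _ => ht'p ⟨x, hx⟩⟩

def towerDomain (q : ∀ j, X (j + 1) → X j) (F : ∀ j, OpenSection (s j)) :
    Set (InverseLimit X q) :=
  {x | x.1 0 ∈ (F 0).U}

theorem isOpen_towerDomain : IsOpen (towerDomain q F) :=
  (F 0).isOpen_U.preimage ((continuous_apply 0).comp continuous_subtype_val)

variable (hF : ∀ j, (F (j + 1)).IsLift (p j) (q j) (F j))
include hF

theorem mem_U_of_mem_towerDomain {x : InverseLimit X q} (hx : x ∈ towerDomain q F) :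
    ∀ j, x.1 j ∈ (F j).U
  | 0 => hx
  | j + 1 => by rw [(hF j).1, Set.mem_preimage, x.2 j]; exact mem_U_of_mem_towerDomain hx j

def towerSection (x : towerDomain q F) : InverseLimit G p :=
  ⟨fun j => (F j).toFun ⟨x.1.1 j, mem_U_of_mem_towerDomain hF x.2 j⟩, fun j => by
    rw [(hF j).2 _ _ (by rw [x.1.2 j]; exact mem_U_of_mem_towerDomain hF x.2 j)]
    exact congrArg (F j).toFun (Subtype.ext (x.1.2 j))⟩

theorem continuous_towerSection : Continuous (towerSection hF) :=
  continuous_pi (fun j => (F j).continuous_toFun.comp <| Continuous.subtype_mk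
    ((continuous_apply j).comp (continuous_subtype_val.comp continuous_subtype_val)) _)
    |>.subtype_mk _

theorem apply_towerSection (x : towerDomain q F) (j : ℕ) :
    s j ((towerSection hF x).1 j) = x.1.1 j :=
  (F j).apply_toFun _

theorem exists_towerSection_sbar_eq
    (hinj : ∀ j (x : X (j + 1)), Set.InjOn (p j) (s (j + 1) ⁻¹' {x}))
    (sbar : InverseLimit G p → InverseLimit X q)
    (hsbar : ∀ (g : InverseLimit G p) (j : ℕ), (sbar g).1 j = s j (g.1 j))
    {g : InverseLimit G p} (hg : g.1 0 ∈ Set.range (F 0).toFun) :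
    ∃ hmem : sbar g ∈ towerDomain q F, towerSection hF ⟨sbar g, hmem⟩ = g := by
  obtain ⟨y, hy⟩ := hg
  have hy' : (sbar g).1 0 = y := by rw [hsbar, ← hy, (F 0).apply_toFun]
  have hmem : sbar g ∈ towerDomain q F := by
    change (sbar g).1 0 ∈ (F 0).U
    exact hy' ▸ y.2
  refine ⟨hmem, InverseLimit.ext_of_injOn_fibers hinj (fun j => ?_) ?_⟩
  · rw [apply_towerSection hF, hsbar]
  · exact (congrArg (F 0).toFun (Subtype.ext hy')).trans hy

theorem range_towerSection (hinj : ∀ j (x : X (j + 1)), Set.InjOn (p j) (s (j + 1) ⁻¹' {x}))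
    (sbar : InverseLimit G p → InverseLimit X q)
    (hsbar : ∀ (g : InverseLimit G p) (j : ℕ), (sbar g).1 j = s j (g.1 j)) :
    Set.range (towerSection hF) = {g | g.1 0 ∈ Set.range (F 0).toFun} := by
  ext g
  refine ⟨?_, fun hg => ?_⟩
  · rintro ⟨x, rfl⟩
    exact ⟨_, rfl⟩
  · obtain ⟨_, hg⟩ := exists_towerSection_sbar_eq hF hinj sbar hsbar hg
    exact ⟨_, hg⟩

end Tower

theorem inverseLimit_sections_of_induced_map_general
    (G X : ℕ → Type*) [∀ j, TopologicalSpace (G j)] [∀ j, TopologicalSpace (X j)]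
    (p : ∀ j, G (j + 1) → G j) (q : ∀ j, X (j + 1) → X j)
    (hqc : ∀ j, Continuous (q j))
    (s : ∀ j, G j → X j)
    -- (a) sections lift along the inverse sequence:
    (hlift : ∀ j (U : Set (X j)), IsOpen U → ∀ t : U → G j, Continuous t →
      IsOpen (Set.range t) → (∀ x : U, s j (t x) = x) →
      ∃ t' : (q j ⁻¹' U : Set (X (j + 1))) → G (j + 1), Continuous t' ∧
        IsOpen (Set.range t') ∧ (∀ x : (q j ⁻¹' U : Set (X (j + 1))), s (j + 1) (t' x) = x) ∧
        ∀ x : (q j ⁻¹' U : Set (X (j + 1))), p j (t' x) = t ⟨q j x.1, x.2⟩)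
    -- (b) sections through every point at level `0`:
    (hbase : ∀ g : G 0, ∃ (U : Set (X 0)) (hU : IsOpen U) (hg : s 0 g ∈ U) (t : U → G 0),
      Continuous t ∧ IsOpen (Set.range t) ∧ (∀ x : U, s 0 (t x) = x) ∧ t ⟨s 0 g, hg⟩ = g)
    -- (c) the bonding maps are injective on fibers:
    (hinj : ∀ j (x : X (j + 1)), Set.InjOn (p j) (s (j + 1) ⁻¹' {x}))
    -- the induced map `s̄ : Ḡ → X̄`:
    (sbar : InverseLimit G p → InverseLimit X q)
    (hsbar : ∀ (g : InverseLimit G p) (j : ℕ), (sbar g).1 j = s j (g.1 j)) :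
    ∀ gbar : InverseLimit G p, ∃ (Ubar : Set (InverseLimit X q)) (_ : IsOpen Ubar)
      (hmem : sbar gbar ∈ Ubar) (tbar : Ubar → InverseLimit G p),
      Continuous tbar ∧ IsOpen (Set.range tbar) ∧
        (∀ x : Ubar, sbar (tbar x) = x.1) ∧ tbar ⟨sbar gbar, hmem⟩ = gbar := by
  intro gbar
  obtain ⟨U₀, hU₀, hg₀, t₀, ht₀c, ht₀o, ht₀s, ht₀g⟩ := hbase (gbar.1 0)
  obtain ⟨F, hF₀, hF⟩ := exists_seq_of_forall_exists
    (fun j F' F => OpenSection.IsLift (p j) (q j) F' F) (exists_isLift_of_lift hqc hlift)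
    ⟨U₀, hU₀, t₀, ht₀c, ht₀o, ht₀s⟩
  have hgbar₀ : gbar.1 0 ∈ Set.range (F 0).toFun := hF₀ ▸ ⟨⟨_, hg₀⟩, ht₀g⟩
  obtain ⟨hmem, hgbar⟩ := exists_towerSection_sbar_eq hF hinj sbar hsbar hgbar₀
  refine ⟨_, isOpen_towerDomain, hmem, towerSection hF, continuous_towerSection hF, ?_,
    fun x => Subtype.ext (funext fun j => by rw [hsbar, apply_towerSection hF]), hgbar⟩
  rw [range_towerSection hF hinj sbar hsbar]
  exact (F 0).isOpen_range.preimage ((continuous_apply 0).comp continuous_subtype_val)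

/-- Given inverse sequences `(G j, p j)` and `(X j, q j)` with compatible
continuous maps `s j : G j → X j`, assume that (a) continuous open-image sections of `s j`
over opens `U` lift to continuous open-image sections of `s (j+1)` over `q j ⁻¹' U`
compatibly with the bonding maps, (b) every `g ∈ G 0` lies in the image of some continuous
open-image section of `s 0` over an open neighbourhood of `s 0 g`, and (c) each `p j` is
injective on the fibers of `s (j+1)`.  Then every point `ḡ` of the inverse limit `Ḡ` lies
in the image of a continuous open-image section of the induced map `s̄ : Ḡ → X̄` over an
open set containing `s̄ ḡ`. -/
theorem inverseLimit_sections_of_induced_map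
    (G X : ℕ → Type*) [∀ j, TopologicalSpace (G j)] [∀ j, TopologicalSpace (X j)]
    (p : ∀ j, G (j + 1) → G j) (q : ∀ j, X (j + 1) → X j)
    (hpc : ∀ j, Continuous (p j)) (hqc : ∀ j, Continuous (q j))
    (s : ∀ j, G j → X j) (hsc : ∀ j, Continuous (s j))
    (hcomm : ∀ j (g : G (j + 1)), q j (s (j + 1) g) = s j (p j g))
    -- (a) sections lift along the inverse sequence:
    (hlift : ∀ j (U : Set (X j)), IsOpen U → ∀ t : U → G j, Continuous t →
      IsOpen (Set.range t) → (∀ x : U, s j (t x) = x) →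
      ∃ t' : (q j ⁻¹' U : Set (X (j + 1))) → G (j + 1), Continuous t' ∧
        IsOpen (Set.range t') ∧ (∀ x : (q j ⁻¹' U : Set (X (j + 1))), s (j + 1) (t' x) = x) ∧
        ∀ x : (q j ⁻¹' U : Set (X (j + 1))), p j (t' x) = t ⟨q j x.1, x.2⟩)
    -- (b) sections through every point at level `0`:
    (hbase : ∀ g : G 0, ∃ (U : Set (X 0)) (hU : IsOpen U) (hg : s 0 g ∈ U) (t : U → G 0),
      Continuous t ∧ IsOpen (Set.range t) ∧ (∀ x : U, s 0 (t x) = x) ∧ t ⟨s 0 g, hg⟩ = g)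
    -- (c) the bonding maps are injective on fibers:
    (hinj : ∀ j (x : X (j + 1)), Set.InjOn (p j) (s (j + 1) ⁻¹' {x}))
    -- the induced map `s̄ : Ḡ → X̄`:
    (sbar : InverseLimit G p → InverseLimit X q)
    (hsbar : ∀ (g : InverseLimit G p) (j : ℕ), (sbar g).1 j = s j (g.1 j)) :
    ∀ gbar : InverseLimit G p, ∃ (Ubar : Set (InverseLimit X q)) (_ : IsOpen Ubar)
      (hmem : sbar gbar ∈ Ubar) (tbar : Ubar → InverseLimit G p),
      Continuous tbar ∧ IsOpen (Set.range tbar) ∧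
        (∀ x : Ubar, sbar (tbar x) = x.1) ∧ tbar ⟨sbar gbar, hmem⟩ = gbar :=
  inverseLimit_sections_of_induced_map_general G X p q hqc s hlift hbase hinj sbar hsbar
end

section
/- For each j ∈ ℕ let G_j be a locally compact Hausdorff topological space and let p_j : G_{j+1} → G_j be a continuous proper map, and let Ḡ be the inverse limit. Then: (a) for every j and every continuous function f : G_j → ℂ vanishing at infinity, the function f ∘ p_j^∞ : Ḡ → ℂ is continuous and vanishes at infinity, and the map f ↦ f ∘ p_j^∞ is a *-homomorphism C₀(G_j) → C₀(Ḡ); (b) the union over all j of the images of these maps is dense in C₀(Ḡ) with respect to the supremum norm; (c) if moreover every p_j is surjective, then each map f ↦ f ∘ p_j^∞ is isometric. -/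
/-!
Each `f ∘ p_j^∞` vanishes at infinity because `p_j^∞` is proper: a thread whose `j`-th
coordinate lies in a compact `K ⊆ G j` has every coordinate `k` in the compact set of points of
`G k` lying over the image of `K` in `G 0`, so `(p_j^∞)⁻¹ K` is a closed subset of a compact box.
Since `f ∘ p_j^∞ = (f ∘ p_j) ∘ p_{j+1}^∞`, the ranges increase with `j`, so their union is a
`*`-subalgebra of `C₀(Ḡ)`; it separates points (Urysohn on the coordinate where two threads
differ) and vanishes nowhere, hence is dense by Stone–Weierstrass, which for `C₀(X)` follows
from the compact case on the one-point compactification after adjoining the constants.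
Isometry under surjective bonding maps holds because `p_j^∞` is then surjective.
-/

open scoped ZeroAtInfty

open Set Function

namespace ZeroAtInftyContinuousMap

section Norm

variable {X Y E : Type*} [TopologicalSpace X] [TopologicalSpace Y] [SeminormedAddCommGroup E]

theorem norm_apply_le (f : C₀(X, E)) (x : X) : ‖f x‖ ≤ ‖f‖ :=
  f.toBCF.norm_coe_le_norm x

theorem norm_le {f : C₀(X, E)} {C : ℝ} (hC : 0 ≤ C) : ‖f‖ ≤ C ↔ ∀ x, ‖f x‖ ≤ C :=
  BoundedContinuousFunction.norm_le hC

theorem norm_comp_of_surjective (f : C₀(X, E)) {g : CocompactMap Y X} (hg : Surjective g) :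
    ‖f.comp g‖ = ‖f‖ := by
  refine le_antisymm ((norm_le (norm_nonneg _)).2 fun y => f.norm_apply_le (g y)) ?_
  refine (norm_le (norm_nonneg _)).2 fun x => ?_
  obtain ⟨y, rfl⟩ := hg x
  exact (f.comp g).norm_apply_le y

end Norm

variable {X Y 𝕜 : Type*} [TopologicalSpace X] [TopologicalSpace Y] [RCLike 𝕜]

def compNonUnitalStarAlgHom (g : CocompactMap Y X) : C₀(X, 𝕜) →⋆ₙₐ[𝕜] C₀(Y, 𝕜) :=
  { compNonUnitalAlgHom g with map_star' := fun _ => rfl }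

theorem exists_eq_one_eqOn_zero [LocallyCompactSpace X] [T2Space X] {x : X} {t : Set X}
    (ht : IsClosed t) (hx : x ∉ t) : ∃ f : C₀(X, 𝕜), f x = 1 ∧ EqOn f 0 t := by
  obtain ⟨f, hf1, hf0, hfc, -⟩ :=
    exists_continuous_one_zero_of_isCompact isCompact_singleton ht (disjoint_singleton_left.2 hx)
  refine ⟨⟨(ContinuousMap.mk _ RCLike.continuous_ofReal).comp f,
    (hfc.comp_left RCLike.ofReal_zero).is_zero_at_infty⟩, ?_, fun y hy => ?_⟩
  · change ((f x : ℝ) : 𝕜) = 1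
    simp [hf1 (mem_singleton x)]
  · change ((f y : ℝ) : 𝕜) = 0
    simp [hf0 hy]

section OnePoint

variable [R1Space X]

def extendByZero (f : C₀(X, 𝕜)) : C(OnePoint X, 𝕜) :=
  OnePoint.continuousMapMk f 0 (by simpa using zero_at_infty f)

@[simp]
theorem extendByZero_coe (f : C₀(X, 𝕜)) (x : X) : extendByZero f x = f x :=
  rfl

@[simp]
theorem extendByZero_infty (f : C₀(X, 𝕜)) : extendByZero f OnePoint.infty = 0 :=
  rfl

def extendByZeroStarAlgHom : C₀(X, 𝕜) →⋆ₙₐ[𝕜] C(OnePoint X, 𝕜) where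
  toFun := extendByZero
  map_smul' c f := by ext y; induction y using OnePoint.rec <;> simp
  map_zero' := by ext y; induction y using OnePoint.rec <;> simp
  map_add' f g := by ext y; induction y using OnePoint.rec <;> simp
  map_mul' f g := by ext y; induction y using OnePoint.rec <;> simp
  map_star' f := by ext y; induction y using OnePoint.rec <;> simp

theorem exists_extendByZero_ne {A : Set C₀(X, 𝕜)} (hsep : ∀ x y, x ≠ y → ∃ f ∈ A, f x ≠ f y)
    (hnz : ∀ x, ∃ f ∈ A, f x ≠ 0) {y₁ y₂ : OnePoint X} (hy : y₁ ≠ y₂) :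
    ∃ f ∈ A, extendByZero f y₁ ≠ extendByZero f y₂ := by
  induction y₁ using OnePoint.rec <;> induction y₂ using OnePoint.rec
  case infty.infty => exact absurd rfl hy
  case infty.coe x =>
    obtain ⟨f, hf, hfx⟩ := hnz x
    exact ⟨f, hf, by simpa using hfx.symm⟩
  case coe.infty x =>
    obtain ⟨f, hf, hfx⟩ := hnz x
    exact ⟨f, hf, by simpa using hfx⟩
  case coe.coe x x' =>
    obtain ⟨f, hf, hfx⟩ := hsep x x' (fun h => hy (congrArg _ h))
    exact ⟨f, hf, by simpa using hfx⟩

theorem dist_le_two_mul_dist_extendByZero (f g : C₀(X, 𝕜)) (c : 𝕜) :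
    dist f g ≤ 2 * dist (algebraMap 𝕜 _ c + extendByZero f) (extendByZero g) := by
  set h := algebraMap 𝕜 C(OnePoint X, 𝕜) c + extendByZero f
  -- evaluating at `∞` bounds the constant term
  have hc : ‖c‖ ≤ dist h (extendByZero g) := by
    simpa [h] using ContinuousMap.dist_apply_le_dist (f := h) (g := extendByZero g) OnePoint.infty
  rw [← dist_toBCF_eq_dist, BoundedContinuousFunction.dist_le (by positivity)]
  intro x
  calc dist (f x) (g x) ≤ dist (f x) (h x) + dist (h x) (g x) := dist_triangle _ _ _
    _ = ‖c‖ + dist (h x) (extendByZero g x) := by simp [h, dist_eq_norm]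
    _ ≤ 2 * dist h (extendByZero g) := by
      linarith [ContinuousMap.dist_apply_le_dist (f := h) (g := extendByZero g) (x : OnePoint X)]

theorem dense_of_separatesPoints (A : NonUnitalStarSubalgebra 𝕜 C₀(X, 𝕜))
    (hsep : ∀ x y, x ≠ y → ∃ f ∈ A, f x ≠ f y) (hnz : ∀ x, ∃ f ∈ A, f x ≠ 0) :
    Dense (A : Set C₀(X, 𝕜)) := by
  set B := StarAlgebra.adjoin 𝕜
    (A.map (extendByZeroStarAlgHom (X := X) (𝕜 := 𝕜)) : Set C(OnePoint X, 𝕜))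
  have hB : B.SeparatesPoints := fun y₁ y₂ hy => by
    obtain ⟨f, hf, hne⟩ := exists_extendByZero_ne hsep hnz hy
    exact ⟨_, ⟨_, StarAlgebra.subset_adjoin _ _ ⟨f, hf, rfl⟩, rfl⟩, hne⟩
  have hg : ∀ g, extendByZero g ∈ B.topologicalClosure := by
    rw [ContinuousMap.starSubalgebra_topologicalClosure_eq_top_of_separatesPoints B hB]
    exact fun _ => trivial
  refine Metric.dense_iff.2 fun g ε hε => ?_
  obtain ⟨h, hhB, hgh⟩ := Metric.mem_closure_iff.1 (hg g) _ (half_pos hε)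
  obtain ⟨⟨c, ⟨_, f, hf, rfl⟩⟩, rfl⟩ := (NonUnitalStarSubalgebra.unitization_range _).ge hhB
  change dist _ (algebraMap 𝕜 _ c + extendByZero f) < ε / 2 at hgh
  refine ⟨f, Metric.mem_ball.2 ?_, hf⟩
  rw [dist_comm] at hgh
  linarith [dist_le_two_mul_dist_extendByZero f g c]

end OnePoint

end ZeroAtInftyContinuousMap

namespace InverseLimit

open ZeroAtInftyContinuousMap

variable {G : ℕ → Type*} {p : ∀ j, G (j + 1) → G j}

theorem surjective_proj (hp : ∀ j, Surjective (p j)) (j : ℕ) :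
    Surjective fun x : InverseLimit G p => x.1 j := by
  induction j generalizing G with
  | zero =>
    intro y
    choose s hs using hp
    exact ⟨⟨fun k => Nat.rec (motive := G) y s k, fun k => hs k _⟩, rfl⟩
  | succ j ih =>
    -- a thread of the shifted system `k ↦ G (k + 1)` extends by its image under `p 0`
    intro y
    obtain ⟨x, hx⟩ :=
      ih (G := fun k => G (k + 1)) (p := fun k => p (k + 1)) (fun k => hp (k + 1)) y
    exact ⟨⟨fun | 0 => p 0 (x.1 0) | k + 1 => x.1 k, fun | 0 => rfl | k + 1 => x.2 k⟩, hx⟩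

variable (p) in
def bondToZero : ∀ k, G k → G 0
  | 0 => id
  | k + 1 => bondToZero k ∘ p k

theorem bondToZero_val (x : InverseLimit G p) : ∀ k, bondToZero p k (x.1 k) = x.1 0
  | 0 => rfl
  | k + 1 => by
    change bondToZero p k (p k (x.1 (k + 1))) = x.1 0
    rw [x.2 k, bondToZero_val x k]

variable [∀ j, TopologicalSpace (G j)]

theorem continuous_bondToZero (hpc : ∀ j, Continuous (p j)) : ∀ k, Continuous (bondToZero p k)
  | 0 => continuous_id
  | k + 1 => (continuous_bondToZero hpc k).comp (hpc k)

theorem isCompact_preimage_bondToZero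
    (hpp : ∀ j, ∀ K : Set (G j), IsCompact K → IsCompact (p j ⁻¹' K)) :
    ∀ k {K : Set (G 0)}, IsCompact K → IsCompact (bondToZero p k ⁻¹' K)
  | 0, _, hK => hK
  | k + 1, _, hK => hpp k _ (isCompact_preimage_bondToZero hpp k hK)

variable [∀ j, T2Space (G j)]

theorem isClosed_setOf_threads (hpc : ∀ j, Continuous (p j)) :
    IsClosed {x : ∀ j, G j | ∀ j, p j (x (j + 1)) = x j} := by
  rw [ofPred_forall]
  exact isClosed_iInter fun j =>
    isClosed_eq ((hpc j).comp (continuous_apply _)) (continuous_apply _)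

theorem isCompact_preimage_proj (hpc : ∀ j, Continuous (p j))
    (hpp : ∀ j, ∀ K : Set (G j), IsCompact K → IsCompact (p j ⁻¹' K)) (j : ℕ) {K : Set (G j)}
    (hK : IsCompact K) : IsCompact ((fun x : InverseLimit G p => x.1 j) ⁻¹' K) := by
  set L := bondToZero p j '' K
  have hbox : IsCompact (univ.pi fun k => bondToZero p k ⁻¹' L) :=
    isCompact_univ_pi fun k =>
      isCompact_preimage_bondToZero hpp k (hK.image (continuous_bondToZero hpc j))
  have : (fun x : InverseLimit G p => x.1 j) ⁻¹' K =
      Subtype.val ⁻¹' ((univ.pi fun k => bondToZero p k ⁻¹' L) ∩ (fun x => x j) ⁻¹' K) := by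
    ext x
    refine ⟨fun hx => ⟨fun k _ => ⟨x.1 j, hx, ?_⟩, hx⟩, fun hx => hx.2⟩
    rw [bondToZero_val, bondToZero_val]
  rw [this]
  exact (isClosed_setOf_threads hpc).isClosedEmbedding_subtypeVal.isCompact_preimage
    (hbox.inter_right (hK.isClosed.preimage (continuous_apply j)))

def projCocompactMap (hpc : ∀ j, Continuous (p j))
    (hpp : ∀ j, ∀ K : Set (G j), IsCompact K → IsCompact (p j ⁻¹' K)) (j : ℕ) :
    CocompactMap (InverseLimit G p) (G j) where
  toFun x := x.1 j
  continuous_toFun := (continuous_apply j).comp continuous_subtype_val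
  cocompact_tendsto' :=
    CocompactMap.tendsto_of_forall_preimage fun _ => isCompact_preimage_proj hpc hpp j

variable {𝕜 : Type*} [RCLike 𝕜] (hpc : ∀ j, Continuous (p j))
  (hpp : ∀ j, ∀ K : Set (G j), IsCompact K → IsCompact (p j ⁻¹' K))

def pullback (j : ℕ) : C₀(G j, 𝕜) →⋆ₙₐ[𝕜] C₀(InverseLimit G p, 𝕜) :=
  compNonUnitalStarAlgHom (projCocompactMap hpc hpp j)

theorem pullback_apply (j : ℕ) (f : C₀(G j, 𝕜)) (x : InverseLimit G p) :
    pullback hpc hpp j f x = f (x.1 j) :=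
  rfl

theorem norm_pullback (hp : ∀ j, Surjective (p j)) (j : ℕ) (f : C₀(G j, 𝕜)) :
    ‖pullback hpc hpp j f‖ = ‖f‖ :=
  norm_comp_of_surjective f (surjective_proj hp j)

theorem monotone_range_pullback :
    Monotone fun j => NonUnitalStarAlgHom.range (pullback (𝕜 := 𝕜) hpc hpp j) := by
  refine monotone_nat_of_le_succ fun j => ?_
  rintro _ ⟨f, rfl⟩
  exact ⟨f.comp ⟨⟨p j, hpc j⟩, CocompactMap.tendsto_of_forall_preimage (hpp j)⟩,
    ext fun x => congrArg f (x.2 j)⟩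

theorem dense_iUnion_range_pullback [∀ j, LocallyCompactSpace (G j)] :
    Dense (⋃ j, range (pullback (𝕜 := 𝕜) hpc hpp j)) := by
  have hdir : Directed (· ≤ ·) fun j => NonUnitalStarAlgHom.range (pullback (𝕜 := 𝕜) hpc hpp j) :=
    (monotone_range_pullback hpc hpp).directed_le
  obtain ⟨A, hA⟩ : ∃ A : NonUnitalStarSubalgebra 𝕜 C₀(InverseLimit G p, 𝕜),
      (A : Set C₀(InverseLimit G p, 𝕜)) = ⋃ j, range (pullback hpc hpp j) :=
    ⟨⨆ j, NonUnitalStarAlgHom.range (pullback hpc hpp j), by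
      rw [NonUnitalStarSubalgebra.coe_iSup_of_directed hdir]
      simp only [NonUnitalStarAlgHom.coe_range]⟩
  have hmem (j : ℕ) (f : C₀(G j, 𝕜)) : pullback hpc hpp j f ∈ A :=
    SetLike.mem_coe.1 (hA ▸ mem_iUnion_of_mem j ⟨f, rfl⟩)
  rw [← hA]
  refine dense_of_separatesPoints A (fun x y hxy => ?_) (fun x => ?_)
  · obtain ⟨j, hj⟩ := Function.ne_iff.1 (Subtype.val_injective.ne hxy)
    obtain ⟨f, hf1, hf0⟩ := exists_eq_one_eqOn_zero (𝕜 := 𝕜) isClosed_singleton hj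
    exact ⟨pullback hpc hpp j f, hmem j f, by simp [pullback_apply, hf1, hf0 rfl]⟩
  · obtain ⟨f, hf1, -⟩ := exists_eq_one_eqOn_zero (𝕜 := 𝕜) isClosed_empty (notMem_empty (x.1 0))
    exact ⟨pullback hpc hpp 0 f, hmem 0 f, by simp [pullback_apply, hf1]⟩

end InverseLimit

open InverseLimit in
/-- For an inverse sequence of locally compact Hausdorff spaces `G j` with
continuous proper bonding maps `p j` and inverse limit `Ḡ`: (a) pulling back along the
canonical projections `p_j^∞ : Ḡ → G j` yields *-homomorphisms `C₀(G j) → C₀(Ḡ)`,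
(b) the union of their ranges is dense in `C₀(Ḡ)` for the supremum norm, and (c) if
moreover every `p j` is surjective, each of these *-homomorphisms is isometric. -/
theorem inverseLimit_czero_pullback_starHom_dense_isometric
    (G : ℕ → Type*) [∀ j, TopologicalSpace (G j)]
    [∀ j, LocallyCompactSpace (G j)] [∀ j, T2Space (G j)]
    (p : ∀ j, G (j + 1) → G j) (hpc : ∀ j, Continuous (p j))
    (hpp : ∀ j, ∀ K : Set (G j), IsCompact K → IsCompact (p j ⁻¹' K)) :
    ∃ Φ : ∀ j : ℕ, C₀(G j, ℂ) →⋆ₙₐ[ℂ] C₀(InverseLimit G p, ℂ),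
      -- (a) `Φ j` is given by composition with the canonical projection:
      (∀ (j : ℕ) (f : C₀(G j, ℂ)) (x : InverseLimit G p), Φ j f x = f (x.1 j)) ∧
      -- (b) the union of the ranges is dense in the supremum norm:
      Dense (⋃ j : ℕ, Set.range (Φ j)) ∧
      -- (c) if each `p j` is surjective, then each `Φ j` is isometric:
      ((∀ j, Function.Surjective (p j)) → ∀ (j : ℕ) (f : C₀(G j, ℂ)), ‖Φ j f‖ = ‖f‖) :=
  ⟨pullback hpc hpp, pullback_apply hpc hpp, dense_iUnion_range_pullback hpc hpp,
    fun hp => norm_pullback hpc hpp hp⟩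
end
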